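/- arXiv:2304.12915 — 7 statements merged into one kernel-verified Lean document; each statement's English description precedes it below -/
import Mathlib

section
/- The cycle C₅ is embeddable in its complement, and for every embedding σ of C₅, the edge-sum graph C₅ ⊕ σ(C₅) is the complete graph K₅; hence C₅ is uniquely embeddable. -/
open SimpleGraph

/-- The cycle graph on `ZMod n`: `i` and `j` adjacent iff they differ by one. -/
def CycGraph (n : ℕ) : SimpleGraph (ZMod n) where
  Adj i j := i ≠ j ∧ (i = j + 1 ∨ j = i + 1)
  symm := by constructor; rintro i j ⟨hne, h⟩; exact ⟨hne.symm, h.symm⟩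
  loopless := by constructor; rintro i ⟨hne, _⟩; exact hne rfl

/-- `σ` is an embedding of `G` into its complement. -/
def IsGraphEmbedding {V : Type*} (G : SimpleGraph V) (σ : Equiv.Perm V) : Prop :=
  ∀ x y, G.Adj x y → ¬ G.Adj (σ x) (σ y)

/-- The edge sum `G ⊕ σ(G)`. -/
def EdgeSum {V : Type*} (G : SimpleGraph V) (σ : Equiv.Perm V) : SimpleGraph V :=
  G ⊔ G.map σ.toEmbedding

/-- Vertex-disjoint union of two graphs. -/
def DisjUnion {α β : Type*} (G : SimpleGraph α) (H : SimpleGraph β) :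
    SimpleGraph (α ⊕ β) where
  Adj x y :=
    (∃ a b, x = Sum.inl a ∧ y = Sum.inl b ∧ G.Adj a b) ∨
    (∃ a b, x = Sum.inr a ∧ y = Sum.inr b ∧ H.Adj a b)
  symm := by
    constructor
    rintro x y (⟨a, b, rfl, rfl, h⟩ | ⟨a, b, rfl, rfl, h⟩)
    · exact Or.inl ⟨b, a, rfl, rfl, h.symm⟩
    · exact Or.inr ⟨b, a, rfl, rfl, h.symm⟩
  loopless := by
    constructor
    rintro x (⟨a, b, rfl, h, hadj⟩ | ⟨a, b, rfl, h, hadj⟩) <;>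
      · cases h; exact hadj.ne rfl

/-!
An embedding `σ` of `G` maps the edges of `G` injectively onto non-edges of `G`. When `G` has
as many edges as its complement, as `C₅` does (five each), `σ(G)` is therefore the whole
complement, and `G ⊕ σ(G) = G ⊔ Gᶜ` is complete. Multiplication by `2` on `ZMod 5` is an
embedding of `C₅`.
-/

open Finset

namespace SimpleGraph

variable {V : Type*} {G : SimpleGraph V} {σ : Equiv.Perm V}

theorem IsGraphEmbedding.map_le_compl (hσ : IsGraphEmbedding G σ) : G.map σ.toEmbedding ≤ Gᶜ := by
  intro u v huv
  obtain ⟨a, b, hab, rfl, rfl⟩ := (map_adj _ _ _ _).mp huv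
  exact ⟨σ.injective.ne hab.ne, hσ a b hab⟩

theorem IsGraphEmbedding.map_eq_compl [Fintype V] [DecidableEq V] [DecidableRel G.Adj]
    (hσ : IsGraphEmbedding G σ) (hcard : #G.edgeFinset = #Gᶜ.edgeFinset) :
    G.map σ.toEmbedding = Gᶜ := by
  refine edgeFinset_inj.mp (eq_of_subset_of_card_le (edgeFinset_mono hσ.map_le_compl) ?_)
  rw [← hcard]
  exact (Iso.map σ G).card_edgeFinset_eq.le

theorem IsGraphEmbedding.edgeSum_eq_top [Fintype V] [DecidableEq V] [DecidableRel G.Adj]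
    (hσ : IsGraphEmbedding G σ) (hcard : #G.edgeFinset = #Gᶜ.edgeFinset) :
    EdgeSum G σ = ⊤ := by
  rw [EdgeSum, hσ.map_eq_compl hcard, sup_compl_eq_top]

end SimpleGraph

instance (n : ℕ) : DecidableRel (CycGraph n).Adj := fun _ _ => instDecidableAnd

theorem cycGraph_five_isGraphEmbedding_two_mul :
    IsGraphEmbedding (CycGraph 5) ⟨(2 * ·), (3 * ·), by decide, by decide⟩ := by
  unfold IsGraphEmbedding; decide

theorem card_edgeFinset_cycGraph_five_eq_compl :
    #(CycGraph 5).edgeFinset = #(CycGraph 5)ᶜ.edgeFinset := by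
  decide

/-- `C₅` is embeddable, and every embedding `σ` satisfies `C₅ ⊕ σ(C₅) = K₅`;
hence `C₅` is uniquely embeddable. -/
theorem c5_uniquely_embeddable :
    (∃ σ : Equiv.Perm (ZMod 5), IsGraphEmbedding (CycGraph 5) σ) ∧
    ∀ σ : Equiv.Perm (ZMod 5), IsGraphEmbedding (CycGraph 5) σ →
      EdgeSum (CycGraph 5) σ = ⊤ :=
  ⟨⟨_, cycGraph_five_isGraphEmbedding_two_mul⟩,
    fun _ hσ => hσ.edgeSum_eq_top card_edgeFinset_cycGraph_five_eq_compl⟩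
end

section
/- For every n ≥ 8, the cycle Cₙ admits an embedding σ in its complement such that the graph Cₙ ⊕ σ(Cₙ) contains a clique on 4 vertices. -/
open SimpleGraph

/-!
List the vertices of `Cₙ` in the cyclic order `1, 3, 0, 2, 5, 7, 9, …, 4, 6, 8, …` (the odd
numbers from `5` up, then the even numbers from `4` up) and let `σ` send `m` to the `m`-th entry.
For `n ≥ 8` any two cyclically consecutive entries differ by at least `2` modulo `n`, so `σ` maps
edges of `Cₙ` to non-edges. The cycle edges `01, 12, 23` together with their images
`σ(2)σ(3) = 02`, `σ(0)σ(1) = 13` and `σ(2)σ(1) = 03` form a `K₄` on `{0, 1, 2, 3}`.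
-/

lemma ZMod.val_add_one_eq_mod {n : ℕ} [NeZero n] (x : ZMod n) :
    (x + 1).val = (x.val + 1) % n := by
  rw [← ZMod.val_natCast, Nat.cast_add_one, ZMod.natCast_zmod_val]

lemma Nat.add_one_mod_of_lt {k n : ℕ} (h : k < n) :
    (k + 1) % n = if k + 1 = n then 0 else k + 1 := by
  split_ifs with hk
  · rw [hk, Nat.mod_self]
  · exact Nat.mod_eq_of_lt (by omega)

lemma SimpleGraph.is4Clique_of_adj {V : Type*} [DecidableEq V] {G : SimpleGraph V}
    {a b c d : V} (hab : G.Adj a b) (hac : G.Adj a c) (had : G.Adj a d) (hbc : G.Adj b c)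
    (hbd : G.Adj b d) (hcd : G.Adj c d) : G.IsNClique 4 {a, b, c, d} :=
  (is3Clique_triple_iff.2 ⟨hbc, hbd, hcd⟩).insert <| by simp [hab, hac, had]

namespace CycGraph

lemma adj_add_one {n : ℕ} (hn : n ≠ 1) (x : ZMod n) : (CycGraph n).Adj x (x + 1) := by
  have := ZMod.nontrivial_iff.2 hn
  exact ⟨by simp, Or.inr rfl⟩

lemma val_of_adj {n : ℕ} [NeZero n] {x y : ZMod n} (h : (CycGraph n).Adj x y) :
    x.val = (y.val + 1) % n ∨ y.val = (x.val + 1) % n := by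
  rcases h.2 with rfl | rfl
  · exact Or.inl (ZMod.val_add_one_eq_mod y)
  · exact Or.inr (ZMod.val_add_one_eq_mod x)

lemma isGraphEmbedding_of_not_adj_add_one {n : ℕ} {σ : Equiv.Perm (ZMod n)}
    (h : ∀ x, ¬ (CycGraph n).Adj (σ x) (σ (x + 1))) : IsGraphEmbedding (CycGraph n) σ := by
  rintro x y ⟨-, rfl | rfl⟩ hσ
  · exact h y hσ.symm
  · exact h x hσ

end CycGraph

namespace EdgeSum

variable {V : Type*} {G : SimpleGraph V} (σ : Equiv.Perm V) {x y : V}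

lemma adj_of_adj (h : G.Adj x y) : (EdgeSum G σ).Adj x y :=
  Or.inl h

lemma adj_apply_of_adj (h : G.Adj x y) : (EdgeSum G σ).Adj (σ x) (σ y) :=
  Or.inr (SimpleGraph.map_adj_apply.2 h)

end EdgeSum

/-- The `m`-th entry of the cyclic order `1, 3, 0, 2, 5, 7, 9, …, 4, 6, 8, …` of the residues
below `n`. -/
def cycEmbeddingNat (n m : ℕ) : ℕ :=
  if m = 0 then 1 else if m = 1 then 3 else if m = 2 then 0 else if m = 3 then 2
  else if 2 * m ≤ n + 2 then 2 * m - 3 else 2 * m - n + n % 2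

lemma cycEmbeddingNat_lt {n m : ℕ} (hn : 4 ≤ n) (hm : m < n) : cycEmbeddingNat n m < n := by
  unfold cycEmbeddingNat; split_ifs <;> omega

lemma cycEmbeddingNat_injOn (n : ℕ) : Set.InjOn (cycEmbeddingNat n) (Set.Iio n) := by
  intro a ha b hb h
  rw [Set.mem_Iio] at ha hb
  unfold cycEmbeddingNat at h
  split_ifs at h <;> omega

lemma cycEmbeddingNat_add_one_not_consecutive {n m : ℕ} (hn : 8 ≤ n) (hm : m < n) :
    ¬ (cycEmbeddingNat n m = (cycEmbeddingNat n ((m + 1) % n) + 1) % n ∨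
      cycEmbeddingNat n ((m + 1) % n) = (cycEmbeddingNat n m + 1) % n) := by
  have hsucc := Nat.add_one_mod_of_lt hm
  have hm' : (m + 1) % n < n := Nat.mod_lt _ (by omega)
  rw [Nat.add_one_mod_of_lt (cycEmbeddingNat_lt (by omega) hm),
    Nat.add_one_mod_of_lt (cycEmbeddingNat_lt (by omega) hm')]
  generalize (m + 1) % n = m' at *
  unfold cycEmbeddingNat
  split_ifs at * <;> grind

noncomputable def cycEmbedding (n : ℕ) (hn : 4 ≤ n) : Equiv.Perm (ZMod n) :=
  have : NeZero n := ⟨by omega⟩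
  Equiv.ofBijective (fun x ↦ (cycEmbeddingNat n x.val : ZMod n)) <|
    Finite.injective_iff_bijective.1 fun x y h ↦ ZMod.val_injective n <|
      cycEmbeddingNat_injOn n x.val_lt y.val_lt <| by
        simpa only [ZMod.val_cast_of_lt (cycEmbeddingNat_lt hn (ZMod.val_lt _))] using
          congrArg ZMod.val h

lemma val_cycEmbedding {n : ℕ} [NeZero n] (hn : 4 ≤ n) (x : ZMod n) :
    (cycEmbedding n hn x).val = cycEmbeddingNat n x.val :=
  ZMod.val_cast_of_lt (cycEmbeddingNat_lt hn x.val_lt)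

lemma cycEmbedding_natCast {n m : ℕ} (hn : 4 ≤ n) (hm : m < n) :
    cycEmbedding n hn m = cycEmbeddingNat n m := by
  have : NeZero n := ⟨by omega⟩
  rw [cycEmbedding, Equiv.ofBijective_apply, ZMod.val_cast_of_lt hm]

lemma isGraphEmbedding_cycEmbedding {n : ℕ} (hn : 8 ≤ n) :
    IsGraphEmbedding (CycGraph n) (cycEmbedding n (by omega)) := by
  have : NeZero n := ⟨by omega⟩
  refine CycGraph.isGraphEmbedding_of_not_adj_add_one fun x hadj ↦ ?_
  have hval := CycGraph.val_of_adj hadj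
  rw [val_cycEmbedding, val_cycEmbedding, ZMod.val_add_one_eq_mod] at hval
  exact cycEmbeddingNat_add_one_not_consecutive hn x.val_lt hval

lemma isNClique_edgeSum_cycEmbedding {n : ℕ} (hn : 4 ≤ n) :
    (EdgeSum (CycGraph n) (cycEmbedding n hn)).IsNClique 4 {0, 1, 2, 3} := by
  have h0 : cycEmbedding n hn 0 = 1 := by
    simpa [cycEmbeddingNat] using cycEmbedding_natCast hn (m := 0) (by omega)
  have h1 : cycEmbedding n hn 1 = 3 := by
    simpa [cycEmbeddingNat] using cycEmbedding_natCast hn (m := 1) (by omega)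
  have h2 : cycEmbedding n hn 2 = 0 := by
    simpa [cycEmbeddingNat] using cycEmbedding_natCast hn (m := 2) (by omega)
  have h3 : cycEmbedding n hn 3 = 2 := by
    simpa [cycEmbeddingNat] using cycEmbedding_natCast hn (m := 3) (by omega)
  have hC : ∀ x : ZMod n, (CycGraph n).Adj x (x + 1) := CycGraph.adj_add_one (by omega)
  have c01 : (CycGraph n).Adj 0 1 := by simpa using hC 0
  have c12 : (CycGraph n).Adj 1 2 := by simpa [one_add_one_eq_two] using hC 1
  have c23 : (CycGraph n).Adj 2 3 := by simpa [two_add_one_eq_three] using hC 2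
  have e02 := EdgeSum.adj_apply_of_adj (cycEmbedding n hn) c23
  have e13 := EdgeSum.adj_apply_of_adj (cycEmbedding n hn) c01
  have e03 := EdgeSum.adj_apply_of_adj (cycEmbedding n hn) c12.symm
  rw [h2, h3] at e02
  rw [h0, h1] at e13
  rw [h2, h1] at e03
  exact SimpleGraph.is4Clique_of_adj (EdgeSum.adj_of_adj _ c01) e02 e03
    (EdgeSum.adj_of_adj _ c12) e13 (EdgeSum.adj_of_adj _ c23)

/-- For every `n ≥ 8`, the cycle `Cₙ` admits an embedding `σ` such that `Cₙ ⊕ σ(Cₙ)`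
contains a clique on 4 vertices. -/
theorem cn_embedding_with_K4 (n : ℕ) (hn : 8 ≤ n) :
    ∃ σ : Equiv.Perm (ZMod n), IsGraphEmbedding (CycGraph n) σ ∧
      ∃ s : Finset (ZMod n), (EdgeSum (CycGraph n) σ).IsNClique 4 s :=
  ⟨cycEmbedding n (by omega), isGraphEmbedding_cycEmbedding hn, _,
    isNClique_edgeSum_cycEmbedding _⟩
end

section
/- Let n ≥ 8 and let r with 3 ≤ r ≤ n/2 − 1 be coprime to n. Then the graph on vertices v₁,…,vₙ whose edge set is the union of the cycle edges vᵢvᵢ₊₁ (mod n) and the edges vᵢvᵢ₊ᵣ (mod n) is the edge-disjoint union of two Hamiltonian cycles and is K₄-free. -/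
open SimpleGraph

/-- The graph on `ZMod n` whose edges join vertices at distance `r`. -/
def DistGraph (n r : ℕ) : SimpleGraph (ZMod n) where
  Adj i j := i ≠ j ∧ (i = j + r ∨ j = i + r)
  symm := by constructor; rintro i j ⟨hne, h⟩; exact ⟨hne.symm, h.symm⟩
  loopless := by constructor; rintro i ⟨hne, _⟩; exact hne rfl

/- Both graphs are Cayley graphs of `ZMod n`, with connection sets `{±1}` and `{±r}`, and
multiplication by the unit `r⁻¹` carries the second onto the first. An edge in both, or a
triangle in the union, would make a sum of two, resp. three, elements of `±1, ±r` vanish mod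
`n`. Since `3 ≤ r` and `2r + 2 ≤ n`, every such integer sum is nonzero and of absolute value
less than `n`, except `±3r`, which is excluded because `r` is coprime to `n`. -/

section CayleyGraph

variable {G : Type*} [AddCommGroup G] {Γ Δ : SimpleGraph G} {S T : Set G}

theorem inf_eq_bot_of_sub_mem (hΓ : ∀ ⦃x y⦄, Γ.Adj x y → y - x ∈ S)
    (hΔ : ∀ ⦃x y⦄, Δ.Adj x y → y - x ∈ T) (hST : Disjoint S T) : Γ ⊓ Δ = ⊥ := by
  ext x y
  simp only [inf_adj, bot_adj, iff_false, not_and]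
  exact fun hxy hxy' => hST.ne_of_mem (hΓ hxy) (hΔ hxy') rfl

theorem cliqueFree_three_of_sub_mem (hΓ : ∀ ⦃x y⦄, Γ.Adj x y → y - x ∈ S)
    (hS : ∀ a ∈ S, ∀ b ∈ S, ∀ c ∈ S, a + b + c ≠ 0) : Γ.CliqueFree 3 := by
  classical
  intro s hs
  obtain ⟨x, y, z, hxy, hxz, hyz, rfl⟩ := is3Clique_iff.mp hs
  exact hS _ (hΓ hxy) _ (hΓ hyz) _ (hΓ hxz.symm) (by abel)

end CayleyGraph

theorem cycGraph_eq_distGraph_one (n : ℕ) : CycGraph n = DistGraph n 1 := by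
  ext i j
  simp [CycGraph, DistGraph]

namespace DistGraph

variable {n : ℕ}

theorem sub_mem_of_adj {r : ℕ} ⦃x y : ZMod n⦄ (h : (DistGraph n r).Adj x y) :
    y - x ∈ Int.cast '' ({(r : ℤ), -(r : ℤ)} : Set ℤ) := by
  rcases h with ⟨-, h | h⟩
  · exact ⟨-r, by simp, by rw [h]; push_cast; ring⟩
  · exact ⟨r, by simp, by rw [h]; push_cast; ring⟩

def isoOfUnitMul (u : (ZMod n)ˣ) {r s : ℕ} (h : (u : ZMod n) * r = s) :
    DistGraph n r ≃g DistGraph n s where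
  toEquiv := Units.mulLeft u
  map_rel_iff' {x y} := by
    simp only [Units.mulLeft_apply, DistGraph, ne_eq, ← h, ← mul_add, u.mul_right_inj]

end DistGraph

theorem intCast_zmod_ne_zero_of_abs_lt {n : ℕ} {s : ℤ} (hs : s ≠ 0) (hsn : |s| < n) :
    (s : ZMod n) ≠ 0 := by
  rw [Ne, ZMod.intCast_zmod_eq_zero_iff_dvd]
  exact fun hdvd => hs (Int.eq_zero_of_abs_lt_dvd hdvd hsn)

theorem intCast_three_mul_ne_zero {n r : ℕ} (hcop : r.Coprime n) (hn : 3 < n) :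
    ((3 * r : ℤ) : ZMod n) ≠ 0 := by
  rw [Ne, ZMod.intCast_zmod_eq_zero_iff_dvd]
  intro hdvd
  have h3 : n ∣ 3 := hcop.symm.dvd_of_dvd_mul_right (by exact_mod_cast hdvd)
  exact absurd (Nat.le_of_dvd (by norm_num) h3) (by omega)

section CycDistSteps

variable {n r : ℕ}

def cycDistSteps (r : ℕ) : Set ℤ := {1, -1} ∪ {(r : ℤ), -(r : ℤ)}

theorem sum_three_cycDistSteps_cases (hr3 : 3 ≤ r) (hrn : 2 * r + 2 ≤ n) {a b c : ℤ}
    (ha : a ∈ cycDistSteps r) (hb : b ∈ cycDistSteps r) (hc : c ∈ cycDistSteps r) :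
    a + b + c = 3 * r ∨ a + b + c = -(3 * r) ∨ (a + b + c ≠ 0 ∧ |a + b + c| < n) := by
  simp only [cycDistSteps, Set.mem_union, Set.mem_insert_iff, Set.mem_singleton_iff] at ha hb hc
  rw [abs_lt]
  rcases ha with (rfl | rfl) | rfl | rfl <;> rcases hb with (rfl | rfl) | rfl | rfl <;>
    rcases hc with (rfl | rfl) | rfl | rfl <;> omega

theorem intCast_sum_three_cycDistSteps_ne_zero (hr3 : 3 ≤ r) (hrn : 2 * r + 2 ≤ n)
    (hcop : r.Coprime n) {a b c : ℤ}
    (ha : a ∈ cycDistSteps r) (hb : b ∈ cycDistSteps r) (hc : c ∈ cycDistSteps r) :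
    ((a + b + c : ℤ) : ZMod n) ≠ 0 := by
  rcases sum_three_cycDistSteps_cases hr3 hrn ha hb hc with h | h | ⟨hs, hsn⟩
  · rw [h]
    exact intCast_three_mul_ne_zero hcop (by omega)
  · rw [h, Int.cast_neg, neg_ne_zero]
    exact intCast_three_mul_ne_zero hcop (by omega)
  · exact intCast_zmod_ne_zero_of_abs_lt hs hsn

theorem cycGraph_sup_distGraph_cliqueFree_three (hr3 : 3 ≤ r) (hrn : 2 * r + 2 ≤ n)
    (hcop : r.Coprime n) : (CycGraph n ⊔ DistGraph n r).CliqueFree 3 := by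
  rw [cycGraph_eq_distGraph_one]
  refine cliqueFree_three_of_sub_mem (S := Int.cast '' cycDistSteps r) ?_ ?_
  · intro x y hxy
    have := hxy.imp (fun h => DistGraph.sub_mem_of_adj h) (fun h => DistGraph.sub_mem_of_adj h)
    rwa [← Set.mem_union, ← Set.image_union, Nat.cast_one] at this
  · rintro _ ⟨a, ha, rfl⟩ _ ⟨b, hb, rfl⟩ _ ⟨c, hc, rfl⟩
    exact_mod_cast intCast_sum_three_cycDistSteps_ne_zero hr3 hrn hcop ha hb hc

end CycDistSteps

theorem cycGraph_inf_distGraph_eq_bot {n r : ℕ} (hr : 1 < r) (hrn : r + 1 < n) :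
    CycGraph n ⊓ DistGraph n r = ⊥ := by
  rw [cycGraph_eq_distGraph_one]
  refine inf_eq_bot_of_sub_mem DistGraph.sub_mem_of_adj DistGraph.sub_mem_of_adj ?_
  rw [Set.disjoint_left]
  rintro _ ⟨a, ha, rfl⟩ ⟨b, hb, hab⟩
  have hba : b - a ≠ 0 ∧ |b - a| < n := by
    simp only [Set.mem_insert_iff, Set.mem_singleton_iff, Nat.cast_one] at ha hb
    rw [abs_lt]
    rcases ha with rfl | rfl <;> rcases hb with rfl | rfl <;> omega
  exact intCast_zmod_ne_zero_of_abs_lt hba.1 hba.2 (by push_cast; rw [hab, sub_self])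

theorem cycle_plus_distance_K4_free_general (n r : ℕ) (hr3 : 3 ≤ r)
    (hr : r ≤ n / 2 - 1) (hcop : Nat.Coprime r n) :
    CycGraph n ⊓ DistGraph n r = ⊥ ∧
    Nonempty (DistGraph n r ≃g CycGraph n) ∧
    (CycGraph n ⊔ DistGraph n r).CliqueFree 4 := by
  have hrn : 2 * r + 2 ≤ n := by omega
  refine ⟨cycGraph_inf_distGraph_eq_bot (by omega) (by omega), ?_,
    (cycGraph_sup_distGraph_cliqueFree_three hr3 hrn hcop).mono (by norm_num)⟩
  rw [cycGraph_eq_distGraph_one]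
  exact ⟨DistGraph.isoOfUnitMul (ZMod.unitOfCoprime r hcop)⁻¹
    (by rw [← ZMod.coe_unitOfCoprime r hcop, Units.inv_mul, Nat.cast_one])⟩

/-- For `n ≥ 8` and `3 ≤ r ≤ n/2 - 1` coprime to `n`, the union of the cycle edges
`vᵢvᵢ₊₁` with the edges `vᵢvᵢ₊ᵣ` is an edge-disjoint union of two Hamiltonian cycles
and is `K₄`-free. -/
theorem cycle_plus_distance_K4_free (n r : ℕ) (hn : 8 ≤ n) (hr3 : 3 ≤ r)
    (hr : r ≤ n / 2 - 1) (hcop : Nat.Coprime r n) :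
    CycGraph n ⊓ DistGraph n r = ⊥ ∧
    Nonempty (DistGraph n r ≃g CycGraph n) ∧
    (CycGraph n ⊔ DistGraph n r).CliqueFree 4 :=
  cycle_plus_distance_K4_free_general n r hr3 hr hcop
end

section
/- For every n ≥ 8, the cycle Cₙ is not uniquely embeddable: there exist embeddings σ₁, σ₂ of Cₙ in its complement such that Cₙ ⊕ σ₁(Cₙ) contains a clique K₄ while Cₙ ⊕ σ₂(Cₙ) is K₄-free; in particular the two edge-sum graphs are not isomorphic. -/
/-
σ₁ runs through the Hamiltonian cycle 2, 0, 3, 1, 5, 7, 9, …, 4, 6, 8, … of ℤ/n: its steps are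
−2, 2, 3, 4, 5 or 6 modulo n, never ±1, and its edges 20, 03, 31 complete the path 0-1-2-3 of Cₙ
to a K₄. σ₂ is multiplication by a unit u ≠ ±1, which makes Cₙ ⊕ σ₂(Cₙ) the circulant graph with
jumps {1, u}. For odd n take u = 2, where a K₄ would need three distinct nonzero integers in
[-2, 2] pairwise at distance at most 2. For even n take u odd: then reduction modulo 2 properly
2-colours the circulant graph.
-/

open SimpleGraph

theorem ZMod.intCast_eq_intCast_iff_of_abs_sub_lt {n : ℕ} {a b : ℤ} (h : |a - b| < n) :
    (a : ZMod n) = b ↔ a = b := by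
  rw [ZMod.intCast_eq_intCast_iff_dvd_sub, ← abs_sub_comm] at *
  exact ⟨fun hdvd => (sub_eq_zero.mp (Int.eq_zero_of_abs_lt_dvd hdvd h)).symm, by rintro rfl; simp⟩

namespace SimpleGraph

theorem circulantGraph_sup {G : Type*} [AddGroup G] (s t : Set G) :
    circulantGraph s ⊔ circulantGraph t = circulantGraph (s ∪ t) := by
  ext x y
  simp only [sup_adj, circulantGraph_adj, Set.mem_union]
  tauto

theorem circulantGraph_map_mulLeft {R : Type*} [Ring R] (u : Rˣ) (s : Set R) :
    (circulantGraph s).map (Units.mulLeft u).toEmbedding =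
      circulantGraph (((u : R) * ·) '' s) := by
  ext x y
  have mem_image : ∀ z, z ∈ ((u : R) * ·) '' s ↔ ↑u⁻¹ * z ∈ s := fun z =>
    ⟨by rintro ⟨a, ha, rfl⟩; simpa, fun h => ⟨_, h, by simp⟩⟩
  simp only [← comap_symm, comap_adj, circulantGraph_adj, mem_image]
  simp [← mul_sub, Units.mulLeft_symm]

theorem circulantGraph_colorable_two {G : Type*} [AddGroup G] (φ : G →+ ZMod 2) {s : Set G}
    (hs : ∀ a ∈ s, φ a = 1) : (circulantGraph s).Colorable 2 := by
  refine ⟨Coloring.mk φ fun {x y} hxy heq => ?_⟩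
  obtain ⟨-, h | h⟩ := hxy
  all_goals have := hs _ h; rw [map_sub, heq, sub_self] at this; exact absurd this (by decide)

theorem exists_int_eq_add_of_adj_circulantGraph_one_two {n : ℕ} {x y : ZMod n}
    (h : (circulantGraph ({1, 2} : Set (ZMod n))).Adj x y) :
    ∃ d : ℤ, (d = 1 ∨ d = -1 ∨ d = 2 ∨ d = -2) ∧ y = x + d := by
  obtain ⟨-, h | h⟩ := h <;> simp only [Set.mem_insert_iff, Set.mem_singleton_iff] at h <;>
    obtain h | h := h
  · exact ⟨-1, by norm_num, by push_cast; linear_combination -h⟩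
  · exact ⟨-2, by norm_num, by push_cast; linear_combination -h⟩
  · exact ⟨1, by norm_num, by push_cast; linear_combination h⟩
  · exact ⟨2, by norm_num, by push_cast; linear_combination h⟩

theorem circulantGraph_one_two_cliqueFree_four {n : ℕ} (hn : 7 ≤ n) :
    (circulantGraph ({1, 2} : Set (ZMod n))).CliqueFree 4 := by
  have lift : ∀ {a b c : ZMod n} {d e f : ℤ}, (d = 1 ∨ d = -1 ∨ d = 2 ∨ d = -2) →
      (e = 1 ∨ e = -1 ∨ e = 2 ∨ e = -2) → (f = 1 ∨ f = -1 ∨ f = 2 ∨ f = -2) →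
      b = a + d → c = a + e → c = b + f → e = d + f := by
    intro a b c d e f hd he hf hb hc hc'
    refine (ZMod.intCast_eq_intCast_iff_of_abs_sub_lt (n := n) (abs_lt.mpr ⟨?_, ?_⟩)).mp ?_
    · omega
    · omega
    · push_cast; linear_combination hc' - hc + hb
  -- The differences inside a 4-clique lift to integers in {±1, ±2} that add up in ℤ (as n ≥ 7).
  intro s hs
  obtain ⟨w, x, y, z, hwx, hwy, hwz, hxy, hxz, hyz, rfl⟩ := Finset.card_eq_four.mp hs.card_eq
  have step := fun {a b} ha hb hab =>
    exists_int_eq_add_of_adj_circulantGraph_one_two (x := a) (y := b) (hs.1 ha hb hab)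
  obtain ⟨d₁, h₁, e₁⟩ := step (by simp) (by simp) hwx
  obtain ⟨d₂, h₂, e₂⟩ := step (by simp) (by simp) hwy
  obtain ⟨d₃, h₃, e₃⟩ := step (by simp) (by simp) hwz
  obtain ⟨d₄, h₄, e₄⟩ := step (by simp) (by simp) hxy
  obtain ⟨d₅, h₅, e₅⟩ := step (by simp) (by simp) hxz
  obtain ⟨d₆, h₆, e₆⟩ := step (by simp) (by simp) hyz
  have := lift h₁ h₂ h₄ e₁ e₂ e₄
  have := lift h₁ h₃ h₅ e₁ e₃ e₅
  have := lift h₂ h₃ h₆ e₂ e₃ e₆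
  omega

end SimpleGraph

theorem cycGraph_eq_circulantGraph (n : ℕ) : CycGraph n = circulantGraph {1} := by
  ext x y
  simp only [CycGraph, circulantGraph_adj, Set.mem_singleton_iff, sub_eq_iff_eq_add']

theorem edgeSum_mulLeft {n : ℕ} (u : (ZMod n)ˣ) :
    EdgeSum (CycGraph n) (Units.mulLeft u) = circulantGraph {1, (u : ZMod n)} := by
  rw [EdgeSum, cycGraph_eq_circulantGraph, circulantGraph_map_mulLeft, circulantGraph_sup,
    Set.image_singleton, mul_one, Set.singleton_union]

theorem isGraphEmbedding_cycGraph_of_sub_ne {n : ℕ} {σ : Equiv.Perm (ZMod n)}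
    (h : ∀ x, σ (x + 1) - σ x ≠ 1 ∧ σ (x + 1) - σ x ≠ -1) :
    IsGraphEmbedding (CycGraph n) σ := by
  rintro x y ⟨-, rfl | rfl⟩ ⟨-, hσ | hσ⟩
  · exact (h y).1 (by rw [hσ]; ring)
  · exact (h y).2 (by rw [hσ]; ring)
  · exact (h x).2 (by rw [hσ]; ring)
  · exact (h x).1 (by rw [hσ]; ring)

theorem isGraphEmbedding_mulLeft {n : ℕ} (u : (ZMod n)ˣ) (h₁ : (u : ZMod n) ≠ 1)
    (h₂ : (u : ZMod n) ≠ -1) : IsGraphEmbedding (CycGraph n) (Units.mulLeft u) :=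
  isGraphEmbedding_cycGraph_of_sub_ne fun x => by
    simpa only [Units.mulLeft_apply, mul_add, mul_one, add_sub_cancel_left] using ⟨h₁, h₂⟩

theorem Nat.exists_odd_coprime_of_even {n : ℕ} (hn : 8 ≤ n) (he : Even n) :
    ∃ m, Odd m ∧ 2 ≤ m ∧ m + 2 ≤ n ∧ m.Coprime n := by
  obtain ⟨m, c, hm, hc, rfl⟩ : ∃ m c, Odd m ∧ c ∣ 4 ∧ n = 2 * m + c := by
    obtain ⟨k, rfl⟩ := he
    rcases Nat.even_or_odd k with ⟨j, rfl⟩ | ⟨j, rfl⟩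
    · exact ⟨2 * j - 1, 2, ⟨j - 1, by omega⟩, by norm_num, by omega⟩
    · exact ⟨2 * j - 1, 4, ⟨j - 1, by omega⟩, dvd_rfl, by omega⟩
  have hc4 : c ≤ 4 := Nat.le_of_dvd (by norm_num) hc
  refine ⟨m, hm, by omega, by omega, ?_⟩
  rw [Nat.coprime_mul_right_add_right]
  exact ((Nat.coprime_two_right.mpr hm).pow_right 2).coprime_dvd_right hc

theorem exists_isGraphEmbedding_cliqueFree_four {n : ℕ} (hn : 8 ≤ n) :
    ∃ σ : Equiv.Perm (ZMod n),
      IsGraphEmbedding (CycGraph n) σ ∧ (EdgeSum (CycGraph n) σ).CliqueFree 4 := by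
  obtain ⟨m, hm, hmn, hcop, hfree⟩ : ∃ m, 2 ≤ m ∧ m + 2 ≤ n ∧ ∃ _ : m.Coprime n,
      (circulantGraph {1, (m : ZMod n)}).CliqueFree 4 := by
    rcases Nat.even_or_odd n with he | ho
    · obtain ⟨m, hodd, hm, hmn, hcop⟩ := Nat.exists_odd_coprime_of_even hn he
      have h2 : 2 ∣ n := even_iff_two_dvd.mp he
      refine ⟨m, hm, hmn, hcop, (circulantGraph_colorable_two
        (ZMod.castHom h2 (ZMod 2)).toAddMonoidHom ?_).cliqueFree (by norm_num)⟩
      rintro _ (rfl | rfl)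
      · exact map_one (ZMod.castHom h2 (ZMod 2))
      · exact (map_natCast (ZMod.castHom h2 (ZMod 2)) m).trans
          (ZMod.natCast_eq_one_iff_odd.mpr hodd)
    · exact ⟨2, le_rfl, by omega, Nat.coprime_two_left.mpr ho,
        by simpa using circulantGraph_one_two_cliqueFree_four (n := n) (by omega)⟩
  have hm_ne : ∀ k : ℤ, k ≠ m → |(m : ℤ) - k| < n → (m : ZMod n) ≠ k := fun k hk hlt h =>
    hk ((ZMod.intCast_eq_intCast_iff_of_abs_sub_lt hlt).mp (by simpa using h)).symm
  refine ⟨Units.mulLeft (ZMod.unitOfCoprime m hcop), isGraphEmbedding_mulLeft _ ?_ ?_, ?_⟩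
  · simpa using hm_ne 1 (by omega) (abs_lt.mpr ⟨by omega, by omega⟩)
  · simpa using hm_ne (-1) (by omega) (abs_lt.mpr ⟨by omega, by omega⟩)
  · rwa [edgeSum_mulLeft, ZMod.coe_unitOfCoprime]

/-- Position `v ↦ vertex` of the Hamiltonian cycle `2, 0, 3, 1, 5, 7, 9, …, 4, 6, 8, …` of `ZMod n`. -/
def k4Seq (n v : ℕ) : ℕ :=
  if v = 0 then 2 else if v = 1 then 0 else if v = 2 then 3 else if v = 3 then 1
  else if v < n / 2 + 2 then 2 * v - 3 else 2 * v - 2 * (n / 2)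

theorem k4Seq_lt {n v : ℕ} (hn : 8 ≤ n) (hv : v < n) : k4Seq n v < n := by
  unfold k4Seq; split_ifs <;> omega

theorem k4Seq_injOn {n : ℕ} (hn : 8 ≤ n) : Set.InjOn (k4Seq n) (Set.Iio n) := by
  intro v hv w hw h
  simp only [Set.mem_Iio] at hv hw
  unfold k4Seq at h; split_ifs at h <;> omega

theorem k4Seq_step {n v : ℕ} (hn : 8 ≤ n) (hv : v < n) :
    ∃ δ : ℤ, (δ = -2 ∨ 2 ≤ δ ∧ δ ≤ 6) ∧ (k4Seq n ((v + 1) % n) : ℤ) ≡ k4Seq n v + δ [ZMOD n] := by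
  obtain ⟨w, hw, hvw⟩ : ∃ w, (v + 1) % n = w ∧ (w = v + 1 ∧ v + 1 < n ∨ w = 0 ∧ v + 1 = n) := by
    obtain h | h : v + 1 < n ∨ v + 1 = n := by omega
    · exact ⟨_, Nat.mod_eq_of_lt h, .inl ⟨rfl, h⟩⟩
    · exact ⟨_, h ▸ Nat.mod_self n, .inr ⟨rfl, h⟩⟩
  obtain ⟨e, he⟩ : ∃ e : ℤ, (k4Seq n w : ℤ) = k4Seq n v + e := ⟨_, (add_sub_cancel _ _).symm⟩
  rw [hw, he]
  have : (e = -2 ∨ 2 ≤ e ∧ e ≤ 6) ∨ (2 ≤ e + n ∧ e + n ≤ 6) := by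
    unfold k4Seq at he; split_ifs at he <;> omega
  rcases this with h | h
  · exact ⟨e, h, rfl⟩
  · exact ⟨e + n, by omega, Int.ModEq.add_left _ Int.add_modEq_right.symm⟩

theorem k4Seq_natCast_val_injective {n : ℕ} (hn : 8 ≤ n) :
    Function.Injective fun x : ZMod n => (k4Seq n x.val : ZMod n) := by
  have : NeZero n := ⟨by omega⟩
  intro x y h
  have hlt := fun z : ZMod n => k4Seq_lt hn z.val_lt
  have := congrArg ZMod.val h
  simp only [ZMod.val_natCast_of_lt (hlt _)] at this
  exact ZMod.val_injective n (k4Seq_injOn hn x.val_lt y.val_lt this)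

noncomputable def k4Perm {n : ℕ} (hn : 8 ≤ n) : Equiv.Perm (ZMod n) :=
  have : NeZero n := ⟨by omega⟩
  Equiv.ofBijective _ (Finite.injective_iff_bijective.mp (k4Seq_natCast_val_injective hn))

theorem k4Perm_natCast {n : ℕ} (hn : 8 ≤ n) (v : ℕ) : k4Perm hn v = k4Seq n (v % n) := by
  simp [k4Perm, ZMod.val_natCast]

theorem k4Perm_add_one {n : ℕ} (hn : 8 ≤ n) (x : ZMod n) :
    ∃ δ : ℤ, (δ = -2 ∨ 2 ≤ δ ∧ δ ≤ 6) ∧ k4Perm hn (x + 1) = k4Perm hn x + δ := by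
  have : NeZero n := ⟨by omega⟩
  obtain ⟨δ, hδ, hmod⟩ := k4Seq_step hn x.val_lt
  refine ⟨δ, hδ, ?_⟩
  rw [← ZMod.natCast_zmod_val x, ← Nat.cast_add_one, k4Perm_natCast, k4Perm_natCast,
    Nat.mod_eq_of_lt x.val_lt]
  exact_mod_cast ((ZMod.intCast_eq_intCast_iff _ _ n).mpr hmod)

theorem isGraphEmbedding_k4Perm {n : ℕ} (hn : 8 ≤ n) :
    IsGraphEmbedding (CycGraph n) (k4Perm hn) := by
  refine isGraphEmbedding_cycGraph_of_sub_ne fun x => ?_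
  obtain ⟨δ, hδ, hx⟩ := k4Perm_add_one hn x
  rw [hx, add_sub_cancel_left]
  have hδ_ne (k : ℤ) (hk : k = 1 ∨ k = -1) : (δ : ZMod n) ≠ k := fun h => by
    have := (ZMod.intCast_eq_intCast_iff_of_abs_sub_lt (abs_lt.mpr ⟨by omega, by omega⟩)).mp h
    omega
  exact ⟨by simpa using hδ_ne 1 (by simp), by simpa using hδ_ne (-1) (by simp)⟩

theorem k4Perm_zero_one_two_three {n : ℕ} (hn : 8 ≤ n) :
    k4Perm hn 0 = 2 ∧ k4Perm hn 1 = 0 ∧ k4Perm hn 2 = 3 ∧ k4Perm hn 3 = 1 := by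
  have h (v : ℕ) (hv : v < n) : k4Perm hn v = k4Seq n v := by
    rw [k4Perm_natCast, Nat.mod_eq_of_lt hv]
  refine ⟨?_, ?_, ?_, ?_⟩
  · simpa [k4Seq] using h 0 (by omega)
  · simpa [k4Seq] using h 1 (by omega)
  · simpa [k4Seq] using h 2 (by omega)
  · simpa [k4Seq] using h 3 (by omega)

theorem isNClique_edgeSum_k4Perm {n : ℕ} (hn : 8 ≤ n) :
    (EdgeSum (CycGraph n) (k4Perm hn)).IsNClique 4 {0, 1, 2, 3} := by
  have : Fact (1 < n) := ⟨by omega⟩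
  obtain ⟨h0, h1, h2, h3⟩ := k4Perm_zero_one_two_three hn
  have cyc (x : ZMod n) : (EdgeSum (CycGraph n) (k4Perm hn)).Adj x (x + 1) :=
    Or.inl ⟨by simp, Or.inr rfl⟩
  have img (x : ZMod n) :
      (EdgeSum (CycGraph n) (k4Perm hn)).Adj (k4Perm hn x) (k4Perm hn (x + 1)) :=
    Or.inr (map_adj_apply.mpr ⟨by simp, Or.inr rfl⟩)
  have e01 := cyc 0
  have e12 := cyc 1
  have e23 := cyc 2
  have e20 := img 0
  have e03 := img 1
  have e31 := img 2
  norm_num [h0, h1, h2, h3] at e01 e12 e23 e20 e03 e31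
  exact (((isNClique_singleton.mpr rfl).insert (by simpa using e23)).insert
    (by simpa using ⟨e12, e31.symm⟩)).insert (by simpa using ⟨e01, e20.symm, e03⟩)

/-- For every `n ≥ 8`, `Cₙ` is not uniquely embeddable: there are embeddings `σ₁, σ₂` such
that `Cₙ ⊕ σ₁(Cₙ)` contains a `K₄` while `Cₙ ⊕ σ₂(Cₙ)` is `K₄`-free; in particular the two
edge-sums are not isomorphic. -/
theorem cn_not_uniquely_embeddable (n : ℕ) (hn : 8 ≤ n) :
    ∃ σ₁ σ₂ : Equiv.Perm (ZMod n),
      IsGraphEmbedding (CycGraph n) σ₁ ∧ IsGraphEmbedding (CycGraph n) σ₂ ∧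
      (∃ s : Finset (ZMod n), (EdgeSum (CycGraph n) σ₁).IsNClique 4 s) ∧
      (EdgeSum (CycGraph n) σ₂).CliqueFree 4 ∧
      ¬ Nonempty (EdgeSum (CycGraph n) σ₁ ≃g EdgeSum (CycGraph n) σ₂) := by
  obtain ⟨σ₂, hσ₂, hfree⟩ := exists_isGraphEmbedding_cliqueFree_four hn
  have hK4 := isNClique_edgeSum_k4Perm hn
  refine ⟨k4Perm hn, σ₂, isGraphEmbedding_k4Perm hn, hσ₂, ⟨_, hK4⟩, hfree, ?_⟩
  rintro ⟨e⟩
  exact hfree.comap ⟨e.toCopy⟩ _ hK4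
end

section
/- Let G be a graph and let a₁, a₂, a₃, a₄ be four vertices of G inducing a path in G such that a₁ and a₄ each have exactly one neighbor outside {a₁,a₂,a₃,a₄}, and a₂, a₃ have no neighbors outside this set. If the graph G' obtained from G by deleting these four vertices admits an embedding in its complement, then G admits an embedding σ in its complement such that G ⊕ σ(G) contains a clique on the four vertices a₁, a₂, a₃, a₄. -/
open SimpleGraph

/-!
The induced path `a₁a₂a₃a₄` is self-complementary: the cyclic permutation
`a₁ ↦ a₃ ↦ a₄ ↦ a₂ ↦ a₁` sends its edges `a₁a₂, a₂a₃, a₃a₄` to the three non-edges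
`a₃a₁, a₁a₄, a₄a₂`, so the path together with its image is a `K₄`. Extend this cycle by the
given embedding of `G - {a₁, a₂, a₃, a₄}`. The only edges leaving the path start at `a₁` or
`a₄`, which are sent to `a₃` and `a₂`; these have no neighbours outside the path, so no edge of
`G` is mapped onto an edge of `G`.
-/

theorem List.formPerm_apply_of_nodup_four {α : Type*} [DecidableEq α] {x y z w : α}
    (h : [x, y, z, w].Nodup) :
    formPerm [x, y, z, w] x = y ∧ formPerm [x, y, z, w] y = z ∧
      formPerm [x, y, z, w] z = w ∧ formPerm [x, y, z, w] w = x :=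
  ⟨formPerm_apply_getElem _ h 0 (by simp), formPerm_apply_getElem _ h 1 (by simp),
    formPerm_apply_getElem _ h 2 (by simp), formPerm_apply_getLast x [y, z, w]⟩

namespace Equiv.Perm

variable {V : Type*} {S : Set V} [DecidablePred (· ∈ Sᶜ)] {c : Perm V} {τ : Perm ↥Sᶜ}

theorem mul_ofSubtype_apply_of_mem {v : V} (hv : v ∈ S) : (c * ofSubtype τ) v = c v := by
  rw [mul_apply, ofSubtype_apply_of_not_mem τ (not_not.2 hv)]

theorem mul_ofSubtype_apply_of_not_mem (hc : ∀ v ∉ S, c v = v) {v : V} (hv : v ∉ S) :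
    (c * ofSubtype τ) v = τ ⟨v, hv⟩ := by
  rw [mul_apply, ofSubtype_apply_of_mem τ hv, hc _ (τ ⟨v, hv⟩).2]

theorem isGraphEmbedding_mul_ofSubtype {G : SimpleGraph V} (hc : ∀ v ∉ S, c v = v)
    (hin : ∀ x ∈ S, ∀ y ∈ S, G.Adj x y → ¬ G.Adj (c x) (c y))
    (hbdry : ∀ x ∈ S, ∀ y ∉ S, G.Adj x y → ∀ z ∉ S, ¬ G.Adj (c x) z)
    (hτ : IsGraphEmbedding (G.induce Sᶜ) τ) :
    IsGraphEmbedding G (c * ofSubtype τ) := by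
  intro x y hxy
  by_cases hx : x ∈ S <;> by_cases hy : y ∈ S
  · rw [mul_ofSubtype_apply_of_mem hx, mul_ofSubtype_apply_of_mem hy]
    exact hin x hx y hy hxy
  · rw [mul_ofSubtype_apply_of_mem hx, mul_ofSubtype_apply_of_not_mem hc hy]
    exact hbdry x hx y hy hxy _ (τ _).2
  · rw [mul_ofSubtype_apply_of_not_mem hc hx, mul_ofSubtype_apply_of_mem hy]
    exact fun h => hbdry y hy x hx hxy.symm _ (τ _).2 h.symm
  · rw [mul_ofSubtype_apply_of_not_mem hc hx, mul_ofSubtype_apply_of_not_mem hc hy]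
    exact hτ ⟨x, hx⟩ ⟨y, hy⟩ hxy

end Equiv.Perm

theorem EdgeSum.adj_apply {V : Type*} {G : SimpleGraph V} (σ : Equiv.Perm V) {u v : V}
    (h : G.Adj u v) : (EdgeSum G σ).Adj (σ u) (σ v) :=
  Or.inr ((map_adj_apply (f := σ.toEmbedding)).2 h)

section PathOnFourVertices

variable {V : Type*} {G : SimpleGraph V} {a₁ a₂ a₃ a₄ : V} {σ : Equiv.Perm V}
  (h1 : σ a₁ = a₃) (h2 : σ a₂ = a₁) (h3 : σ a₃ = a₄) (h4 : σ a₄ = a₂)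
include h1 h2 h3 h4

theorem not_adj_apply_of_inducedPath
    (h13 : ¬ G.Adj a₁ a₃) (h14 : ¬ G.Adj a₁ a₄) (h24 : ¬ G.Adj a₂ a₄) :
    ∀ x ∈ ({a₁, a₂, a₃, a₄} : Set V), ∀ y ∈ ({a₁, a₂, a₃, a₄} : Set V),
      G.Adj x y → ¬ G.Adj (σ x) (σ y) := by
  simp only [Set.mem_insert_iff, Set.mem_singleton_iff]
  rintro x (rfl | rfl | rfl | rfl) y (rfl | rfl | rfl | rfl) hxy <;>
    simp_all [G.adj_comm]

theorem isClique_edgeSum_of_path (h12 : G.Adj a₁ a₂) (h23 : G.Adj a₂ a₃) (h34 : G.Adj a₃ a₄) :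
    (EdgeSum G σ).IsClique {a₁, a₂, a₃, a₄} := by
  have e13 := EdgeSum.adj_apply σ h12.symm
  have e14 := EdgeSum.adj_apply σ h23
  have e24 := EdgeSum.adj_apply σ h34.symm
  rw [h1, h2] at e13
  rw [h2, h3] at e14
  rw [h3, h4] at e24
  simp only [isClique_insert, Set.mem_insert_iff, Set.mem_singleton_iff]
  refine ⟨⟨⟨isClique_singleton a₄, ?_⟩, ?_⟩, ?_⟩
  · rintro _ rfl -; exact Or.inl h34
  · rintro _ (rfl | rfl) -; exacts [Or.inl h23, e24]
  · rintro _ (rfl | rfl | rfl) -; exacts [Or.inl h12, e13, e14]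

end PathOnFourVertices

theorem packing_with_K4_of_removed_path_general {V : Type*} (G : SimpleGraph V)
    (a₁ a₂ a₃ a₄ : V) (S : Set V) (hS : S = {a₁, a₂, a₃, a₄})
    (hnd : ([a₁, a₂, a₃, a₄] : List V).Nodup)
    (h12 : G.Adj a₁ a₂) (h23 : G.Adj a₂ a₃) (h34 : G.Adj a₃ a₄)
    (h13 : ¬ G.Adj a₁ a₃) (h14 : ¬ G.Adj a₁ a₄) (h24 : ¬ G.Adj a₂ a₄)
    (h2out : ∀ w ∉ S, ¬ G.Adj a₂ w)
    (h3out : ∀ w ∉ S, ¬ G.Adj a₃ w)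
    (hemb : ∃ σ' : Equiv.Perm ↥(Sᶜ), IsGraphEmbedding (G.induce Sᶜ) σ') :
    ∃ σ : Equiv.Perm V, IsGraphEmbedding G σ ∧ (EdgeSum G σ).IsClique S := by
  classical
  obtain ⟨τ, hτ⟩ := hemb
  subst hS
  set c := List.formPerm [a₁, a₃, a₄, a₂]
  obtain ⟨c1, c3, c4, c2⟩ := List.formPerm_apply_of_nodup_four
    (((List.perm_append_comm (l₁ := [a₂]) (l₂ := [a₃, a₄])).cons a₁).nodup hnd)
  have hc : ∀ v ∉ ({a₁, a₂, a₃, a₄} : Set V), c v = v := fun v hv =>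
    List.formPerm_apply_of_notMem (by simpa [or_comm, or_left_comm] using hv)
  have hbdry : ∀ x ∈ ({a₁, a₂, a₃, a₄} : Set V), ∀ y ∉ ({a₁, a₂, a₃, a₄} : Set V),
      G.Adj x y → ∀ z ∉ ({a₁, a₂, a₃, a₄} : Set V), ¬ G.Adj (c x) z := by
    rintro x (rfl | rfl | rfl | rfl) y hy hxy z hz
    · rw [c1]; exact h3out z hz
    · exact (h2out y hy hxy).elim
    · exact (h3out y hy hxy).elim
    · rw [c4]; exact h2out z hz
  have hσ : ∀ v ∈ ({a₁, a₂, a₃, a₄} : Set V), (c * Equiv.Perm.ofSubtype τ) v = c v :=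
    fun _ => Equiv.Perm.mul_ofSubtype_apply_of_mem
  refine ⟨c * Equiv.Perm.ofSubtype τ, Equiv.Perm.isGraphEmbedding_mul_ofSubtype hc
    (not_adj_apply_of_inducedPath c1 c2 c3 c4 h13 h14 h24) hbdry hτ, ?_⟩
  exact isClique_edgeSum_of_path ((hσ a₁ (by simp)).trans c1) ((hσ a₂ (by simp)).trans c2)
    ((hσ a₃ (by simp)).trans c3) ((hσ a₄ (by simp)).trans c4) h12 h23 h34

/-- If `a₁,a₂,a₃,a₄` induce a path in `G`, with `a₁, a₄` each having exactly one neighbor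
outside `{a₁,a₂,a₃,a₄}` and `a₂, a₃` having none, and if `G` minus these four vertices is
embeddable in its complement, then `G` has an embedding `σ` such that `G ⊕ σ(G)` contains
the clique `{a₁,a₂,a₃,a₄}`. -/
theorem packing_with_K4_of_removed_path {V : Type*} (G : SimpleGraph V)
    (a₁ a₂ a₃ a₄ : V) (S : Set V) (hS : S = {a₁, a₂, a₃, a₄})
    (hnd : ([a₁, a₂, a₃, a₄] : List V).Nodup)
    (h12 : G.Adj a₁ a₂) (h23 : G.Adj a₂ a₃) (h34 : G.Adj a₃ a₄)
    (h13 : ¬ G.Adj a₁ a₃) (h14 : ¬ G.Adj a₁ a₄) (h24 : ¬ G.Adj a₂ a₄)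
    (h1out : ∃! w, w ∉ S ∧ G.Adj a₁ w)
    (h4out : ∃! w, w ∉ S ∧ G.Adj a₄ w)
    (h2out : ∀ w ∉ S, ¬ G.Adj a₂ w)
    (h3out : ∀ w ∉ S, ¬ G.Adj a₃ w)
    (hemb : ∃ σ' : Equiv.Perm ↥(Sᶜ), IsGraphEmbedding (G.induce Sᶜ) σ') :
    ∃ σ : Equiv.Perm V, IsGraphEmbedding G σ ∧ (EdgeSum G σ).IsClique S :=
  packing_with_K4_of_removed_path_general G a₁ a₂ a₃ a₄ S hS hnd h12 h23 h34 h13 h14 h24 h2out h3out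
    hemb
end

section
/- The graph 3C₃ (three vertex-disjoint triangles on 9 vertices) is uniquely embeddable in its complement: it admits an embedding, and for any two embeddings σ₁, σ₂ the graphs G ⊕ σ₁(G) and G ⊕ σ₂(G) are isomorphic. In particular, in any embedding the three image triangles each use exactly one vertex from each of the three original triangles. -/
open SimpleGraph

/-- The disjoint union of `k` triangles `kC₃`, on vertex set `Fin k × ZMod 3`. -/
def Triangles (k : ℕ) : SimpleGraph (Fin k × ZMod 3) where
  Adj x y := x.1 = y.1 ∧ x.2 ≠ y.2
  symm := by constructor; rintro x y ⟨h1, h2⟩; exact ⟨h1.symm, h2.symm⟩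
  loopless := by constructor; rintro x ⟨_, h⟩; exact h rfl

/-!
An embedding `σ` of `kC₃` sends the three vertices of each (black) triangle into three different
triangles. So a vertex `v` of `G ⊕ σ(G)` is determined by its black triangle and its red triangle
(the image `σ(T)` containing `v`), and two vertices are adjacent exactly when they share one of
the two. For `k = 3` this identifies `G ⊕ σ(G)` with the rook graph `K₃ □ K₃`, whatever `σ` is.
-/

theorem boxProd_top_adj_iff {α β : Type*} {p q : α × β} :
    ((⊤ : SimpleGraph α) □ (⊤ : SimpleGraph β)).Adj p q ↔ p ≠ q ∧ (p.1 = q.1 ∨ p.2 = q.2) := by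
  simp only [boxProd_adj, top_adj, ne_eq, Prod.ext_iff]
  tauto

section

variable {k : ℕ}

theorem triangles_adj_iff {x y : Fin k × ZMod 3} :
    (Triangles k).Adj x y ↔ x ≠ y ∧ x.1 = y.1 := by
  change x.1 = y.1 ∧ x.2 ≠ y.2 ↔ _
  simp only [ne_eq, Prod.ext_iff]
  tauto

theorem edgeSum_triangles_adj_iff {σ : Equiv.Perm (Fin k × ZMod 3)} {u v : Fin k × ZMod 3} :
    (EdgeSum (Triangles k) σ).Adj u v ↔
      u ≠ v ∧ (u.1 = v.1 ∨ (σ.symm u).1 = (σ.symm v).1) := by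
  rw [EdgeSum, sup_adj, ← comap_symm, comap_adj, triangles_adj_iff, triangles_adj_iff,
    Equiv.toEmbedding_apply, Equiv.toEmbedding_apply, σ.symm.injective.ne_iff]
  tauto

theorem IsGraphEmbedding.fst_ne_of_triangles_adj {σ : Equiv.Perm (Fin k × ZMod 3)}
    (hσ : IsGraphEmbedding (Triangles k) σ) {x y : Fin k × ZMod 3}
    (hxy : (Triangles k).Adj x y) : (σ x).1 ≠ (σ y).1 := fun h =>
  hσ x y hxy (triangles_adj_iff.2 ⟨σ.injective.ne (triangles_adj_iff.1 hxy).1, h⟩)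

/-- The black and the red triangle containing `v`. -/
def triangleIndices (σ : Equiv.Perm (Fin k × ZMod 3)) (v : Fin k × ZMod 3) : Fin k × Fin k :=
  (v.1, (σ.symm v).1)

theorem IsGraphEmbedding.injective_triangleIndices {σ : Equiv.Perm (Fin k × ZMod 3)}
    (hσ : IsGraphEmbedding (Triangles k) σ) : Function.Injective (triangleIndices σ) := by
  intro u v huv
  by_contra hne
  obtain ⟨hblack, hred⟩ := Prod.ext_iff.1 huv
  refine hσ.fst_ne_of_triangles_adj (triangles_adj_iff.2 ⟨σ.symm.injective.ne hne, hred⟩) ?_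
  simpa [triangleIndices] using hblack

end

theorem IsGraphEmbedding.bijective_triangleIndices {σ : Equiv.Perm (Fin 3 × ZMod 3)}
    (hσ : IsGraphEmbedding (Triangles 3) σ) : Function.Bijective (triangleIndices σ) :=
  (Fintype.bijective_iff_injective_and_card _).2 ⟨hσ.injective_triangleIndices, by simp⟩

noncomputable def IsGraphEmbedding.edgeSumIsoRook {σ : Equiv.Perm (Fin 3 × ZMod 3)}
    (hσ : IsGraphEmbedding (Triangles 3) σ) :
    EdgeSum (Triangles 3) σ ≃g (⊤ : SimpleGraph (Fin 3)) □ (⊤ : SimpleGraph (Fin 3)) where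
  toEquiv := Equiv.ofBijective _ hσ.bijective_triangleIndices
  map_rel_iff' := by
    intro u v
    rw [Equiv.ofBijective_apply, Equiv.ofBijective_apply, boxProd_top_adj_iff,
      hσ.injective_triangleIndices.ne_iff, edgeSum_triangles_adj_iff]
    rfl

theorem IsGraphEmbedding.bijective_fst_apply_mk {σ : Equiv.Perm (Fin 3 × ZMod 3)}
    (hσ : IsGraphEmbedding (Triangles 3) σ) (i : Fin 3) :
    Function.Bijective fun a : ZMod 3 => (σ (i, a)).1 := by
  refine (Fintype.bijective_iff_injective_and_card _).2 ⟨fun a b hab => ?_, by simp⟩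
  by_contra hne
  exact hσ.fst_ne_of_triangles_adj
    (triangles_adj_iff.2 ⟨(Prod.mk_right_injective i).ne hne, rfl⟩) hab

def transposeTriangles : Equiv.Perm (Fin 3 × ZMod 3) :=
  (Equiv.prodComm _ _).trans
    (Equiv.prodCongr (ZMod.finEquiv 3).symm.toEquiv (ZMod.finEquiv 3).toEquiv)

theorem isGraphEmbedding_transposeTriangles :
    IsGraphEmbedding (Triangles 3) transposeTriangles := by
  intro x y hxy hσ
  exact hxy.2 ((ZMod.finEquiv 3).symm.injective hσ.1)

/-- `3C₃` is uniquely embeddable: it admits an embedding, any two embeddings give isomorphic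
edge-sums, and in any embedding each image (red) triangle uses exactly one vertex from each
of the three original (black) triangles. -/
theorem three_c3_uniquely_embeddable :
    (∃ σ : Equiv.Perm (Fin 3 × ZMod 3), IsGraphEmbedding (Triangles 3) σ) ∧
    (∀ σ₁ σ₂ : Equiv.Perm (Fin 3 × ZMod 3),
      IsGraphEmbedding (Triangles 3) σ₁ → IsGraphEmbedding (Triangles 3) σ₂ →
      Nonempty (EdgeSum (Triangles 3) σ₁ ≃g EdgeSum (Triangles 3) σ₂)) ∧
    (∀ σ : Equiv.Perm (Fin 3 × ZMod 3), IsGraphEmbedding (Triangles 3) σ →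
      ∀ i j : Fin 3, ∃! a : ZMod 3, (σ (i, a)).1 = j) := by
  refine ⟨⟨transposeTriangles, isGraphEmbedding_transposeTriangles⟩, ?_, ?_⟩
  · exact fun σ₁ σ₂ h₁ h₂ => ⟨h₁.edgeSumIsoRook.trans h₂.edgeSumIsoRook.symm⟩
  · exact fun σ hσ i => (hσ.bijective_fst_apply_mk i).existsUnique
end

section
/- The graph G = 5C₃ (five vertex-disjoint triangles on 15 vertices) is not uniquely embeddable: there exist embeddings σ₁ and σ₂ such that in G ⊕ σ₁(G) every set of 9 vertices induces at most 4 vertex-disjoint triangles of the original black/red triangle structure, whereas in G ⊕ σ₂(G) there is a set of 9 vertices inducing 5 triangles among the black and red triangles; hence G ⊕ σ₁(G) and G ⊕ σ₂(G) are not isomorphic. -/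
open SimpleGraph

/-- The family of black triangles `Tᵢ` and red triangles `σ(Tᵢ)` of a packing `σ` of `5C₃`. -/
def BRTriangles (σ : Equiv.Perm (Fin 5 × ZMod 3)) : Set (Set (Fin 5 × ZMod 3)) :=
  {S | (∃ i : Fin 5, S = {x | x.1 = i}) ∨ (∃ i : Fin 5, S = σ '' {x | x.1 = i})}

/-!
Take `σ₁ (i, c) = (i + c, c)`, and let `σ₂` fix column `0`, shift column `1` by one and permute
column `2` by the `5`-cycle `(0 2 4 3 1)`. The red triangles `0` and `1` of `σ₂` lie in the first
three rows, which therefore carry five black/red triangles on nine vertices. For `σ₁` this is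
impossible: it would take three black rows and two red triangles meeting exactly these rows (or
the same with the colours exchanged), but the red triangle `i` meets the rows `i, i + 1, i + 2`.
Finally, the black and red triangles are the only triangles of `G ⊕ σ₁(G)`, so an isomorphism
`G ⊕ σ₂(G) ≅ G ⊕ σ₁(G)` would carry the five triangles in the first three rows to five black/red
triangles of `σ₁` on nine vertices.
-/

namespace FiveTriangles

open Finset

instance {k : ℕ} : DecidableRel (Triangles k).Adj :=
  fun x y => inferInstanceAs (Decidable (x.1 = y.1 ∧ x.2 ≠ y.2))

lemma _root_.SimpleGraph.IsClique.image_iso {α β : Type*} {G : SimpleGraph α}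
    {H : SimpleGraph β} {s : Set α} (h : G.IsClique s) (e : G ≃g H) : H.IsClique (e '' s) := by
  rintro _ ⟨a, ha, rfl⟩ _ ⟨b, hb, rfl⟩ hab
  exact e.map_adj_iff.mpr (h ha hb (ne_of_apply_ne e hab))

section EdgeSum

variable {V : Type*} (G : SimpleGraph V) (σ : Equiv.Perm V)

lemma edgeSum_adj (x y : V) :
    (EdgeSum G σ).Adj x y ↔ G.Adj x y ∨ G.Adj (σ.symm x) (σ.symm y) := by
  have h := map_adj_apply (G := G) (f := σ.toEmbedding) (a := σ.symm x) (b := σ.symm y)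
  simp only [Equiv.coe_toEmbedding, Equiv.apply_symm_apply] at h
  rw [EdgeSum, sup_adj]
  exact or_congr_right h

instance [DecidableRel G.Adj] : DecidableRel (EdgeSum G σ).Adj :=
  fun x y => decidable_of_iff _ (edgeSum_adj G σ x y).symm

end EdgeSum

def columnPerm {α β : Type*} (f : β → Equiv.Perm α) : Equiv.Perm (α × β) where
  toFun x := (f x.2 x.1, x.2)
  invFun x := ((f x.2).symm x.1, x.2)
  left_inv x := by simp
  right_inv x := by simp

lemma isGraphEmbedding_columnPerm {k : ℕ} (f : ZMod 3 → Equiv.Perm (Fin k))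
    (hf : ∀ i c c', c ≠ c' → f c i ≠ f c' i) : IsGraphEmbedding (Triangles k) (columnPerm f) := by
  rintro x y ⟨hrow, hcol⟩ ⟨himg, -⟩
  exact hf x.1 x.2 y.2 hcol (by simpa [columnPerm, hrow] using himg)

section Triangles

variable {k : ℕ}

lemma isClique_row (i : Fin k) : (Triangles k).IsClique {x | x.1 = i} := by
  rintro x (rfl : x.1 = i) y (hy : y.1 = x.1) hxy
  exact ⟨hy.symm, fun h => hxy (Prod.ext hy.symm h)⟩

def blackTriangle (i : Fin k) : Finset (Fin k × ZMod 3) := {i} ×ˢ univ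

def redTriangle (σ : Equiv.Perm (Fin k × ZMod 3)) (i : Fin k) : Finset (Fin k × ZMod 3) :=
  (blackTriangle i).map σ.toEmbedding

lemma coe_blackTriangle (i : Fin k) :
    (blackTriangle i : Set (Fin k × ZMod 3)) = {x | x.1 = i} := by
  ext ⟨a, b⟩
  simp [blackTriangle, eq_comm]

lemma coe_redTriangle (σ : Equiv.Perm (Fin k × ZMod 3)) (i : Fin k) :
    (redTriangle σ i : Set (Fin k × ZMod 3)) = σ '' blackTriangle i :=
  coe_map _ _

lemma card_blackTriangle (i : Fin k) : #(blackTriangle i) = 3 := by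
  simp [blackTriangle]

lemma card_redTriangle (σ : Equiv.Perm (Fin k × ZMod 3)) (i : Fin k) :
    #(redTriangle σ i) = 3 := by
  rw [redTriangle, card_map, card_blackTriangle]

end Triangles

section BRTriangles

variable (σ : Equiv.Perm (Fin 5 × ZMod 3))

def brTriangleFinset : Finset (Finset (Fin 5 × ZMod 3)) :=
  univ.image blackTriangle ∪ univ.image (redTriangle σ)

lemma brTriangles_eq :
    BRTriangles σ = (↑) '' (brTriangleFinset σ : Set (Finset (Fin 5 × ZMod 3))) := by
  ext S
  simp only [BRTriangles, brTriangleFinset, coe_union, coe_image, coe_univ, Set.image_univ,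
    Set.image_union, ← Set.range_comp, Function.comp_def, coe_redTriangle, coe_blackTriangle,
    Set.mem_union, Set.mem_range, Set.mem_ofPred_eq, eq_comm]

lemma card_eq_three_of_mem_brTriangleFinset {T : Finset (Fin 5 × ZMod 3)}
    (hT : T ∈ brTriangleFinset σ) : #T = 3 := by
  simp only [brTriangleFinset, mem_union, mem_image, mem_univ, true_and] at hT
  rcases hT with ⟨i, rfl⟩ | ⟨i, rfl⟩
  exacts [card_blackTriangle i, card_redTriangle σ i]

lemma ncard_brTriangles_subset (W : Finset (Fin 5 × ZMod 3)) :
    {S ∈ BRTriangles σ | S ⊆ W}.ncard = #{T ∈ brTriangleFinset σ | T ⊆ W} := by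
  rw [← Set.ncard_coe_finset, ← Set.ncard_image_of_injective _ coe_injective, brTriangles_eq]
  congr 1
  ext S
  simp only [Set.mem_image, mem_coe, mem_filter, ← coe_subset]
  constructor
  · rintro ⟨⟨T, hT, rfl⟩, hTW⟩
    exact ⟨T, ⟨hT, hTW⟩, rfl⟩
  · rintro ⟨T, ⟨hT, hTW⟩, rfl⟩
    exact ⟨⟨T, hT, rfl⟩, hTW⟩

lemma card_filter_brTriangleFinset_subset_le (W : Finset (Fin 5 × ZMod 3)) :
    #{T ∈ brTriangleFinset σ | T ⊆ W} ≤
      #{i | blackTriangle i ⊆ W} + #{i | redTriangle σ i ⊆ W} := by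
  rw [brTriangleFinset, filter_union, filter_image, filter_image]
  exact (card_union_le _ _).trans (add_le_add card_image_le card_image_le)

lemma isClique_of_mem_brTriangles {S : Set (Fin 5 × ZMod 3)} (hS : S ∈ BRTriangles σ) :
    (EdgeSum (Triangles 5) σ).IsClique S := by
  rcases hS with ⟨i, rfl⟩ | ⟨i, rfl⟩
  · exact (isClique_row i).mono le_sup_left
  · exact ((isClique_row i).map (f := σ.toEmbedding)).mono le_sup_right

lemma ncard_eq_three_of_mem_brTriangles {S : Set (Fin 5 × ZMod 3)} (hS : S ∈ BRTriangles σ) :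
    S.ncard = 3 := by
  rw [brTriangles_eq] at hS
  obtain ⟨T, hT, rfl⟩ := hS
  rw [Set.ncard_coe_finset, card_eq_three_of_mem_brTriangleFinset σ hT]

lemma mem_brTriangles_of_subset {S : Set (Fin 5 × ZMod 3)} (hS : S.ncard = 3)
    {T : Finset (Fin 5 × ZMod 3)} (hT : T ∈ brTriangleFinset σ) (hST : S ⊆ T) :
    S ∈ BRTriangles σ := by
  have hle : (T : Set (Fin 5 × ZMod 3)).ncard ≤ S.ncard := by
    rw [Set.ncard_coe_finset, card_eq_three_of_mem_brTriangleFinset σ hT, hS]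
  rw [Set.eq_of_subset_of_ncard_le hST hle, brTriangles_eq]
  exact Set.mem_image_of_mem _ hT

end BRTriangles

lemma ncard_brTriangles_subset_le_of_iso {σ τ : Equiv.Perm (Fin 5 × ZMod 3)}
    (hσ : ∀ ⦃S⦄, S.ncard = 3 → (EdgeSum (Triangles 5) σ).IsClique S → S ∈ BRTriangles σ)
    (e : EdgeSum (Triangles 5) τ ≃g EdgeSum (Triangles 5) σ) (W : Set (Fin 5 × ZMod 3)) :
    {S ∈ BRTriangles τ | S ⊆ W}.ncard ≤ {S ∈ BRTriangles σ | S ⊆ e '' W}.ncard := by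
  refine Set.ncard_le_ncard_of_injOn (e '' ·) ?_ (Set.image_injective.mpr e.injective).injOn
  rintro S ⟨hS, hSW⟩
  refine ⟨hσ ?_ ((isClique_of_mem_brTriangles τ hS).image_iso e), Set.image_mono hSW⟩
  rw [Set.ncard_image_of_injective _ e.injective, ncard_eq_three_of_mem_brTriangles τ hS]

def sigma1 : Equiv.Perm (Fin 5 × ZMod 3) :=
  columnPerm fun c => Equiv.addRight (Fin.castLE (by decide) (c : Fin 3))

def fiveCycle : Equiv.Perm (Fin 5) := ⟨![2, 0, 4, 1, 3], ![1, 3, 0, 4, 2], by decide, by decide⟩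

def sigma2 : Equiv.Perm (Fin 5 × ZMod 3) :=
  columnPerm ![1, Equiv.addRight 1, fiveCycle]

lemma isGraphEmbedding_sigma1 : IsGraphEmbedding (Triangles 5) sigma1 :=
  isGraphEmbedding_columnPerm _ (by decide)

lemma isGraphEmbedding_sigma2 : IsGraphEmbedding (Triangles 5) sigma2 :=
  isGraphEmbedding_columnPerm _ (by decide)

lemma exists_mem_brTriangleFinset_of_adj_sigma1 : ∀ x y z,
    (EdgeSum (Triangles 5) sigma1).Adj x y → (EdgeSum (Triangles 5) sigma1).Adj y z →
      (EdgeSum (Triangles 5) sigma1).Adj x z →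
        ∃ T ∈ brTriangleFinset sigma1, x ∈ T ∧ y ∈ T ∧ z ∈ T := by
  decide

lemma mem_brTriangles_of_isClique_sigma1 ⦃S : Set (Fin 5 × ZMod 3)⦄ (hS : S.ncard = 3)
    (hclique : (EdgeSum (Triangles 5) sigma1).IsClique S) : S ∈ BRTriangles sigma1 := by
  obtain ⟨x, y, z, hxy, hxz, hyz, rfl⟩ := Set.ncard_eq_three.mp hS
  obtain ⟨T, hT, hx, hy, hz⟩ := exists_mem_brTriangleFinset_of_adj_sigma1 x y z
    (hclique (by simp) (by simp) hxy) (hclique (by simp) (by simp) hyz)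
    (hclique (by simp) (by simp) hxz)
  exact mem_brTriangles_of_subset sigma1 hS hT (by simp [Set.insert_subset_iff, hx, hy, hz])

lemma card_add_card_le_four_sigma1 : ∀ I J : Finset (Fin 5),
    #(I.biUnion blackTriangle ∪ J.biUnion (redTriangle sigma1)) ≤ 9 → #I + #J ≤ 4 := by
  decide

lemma ncard_brTriangles_subset_le_four_sigma1 {W : Set (Fin 5 × ZMod 3)} (hW : W.ncard ≤ 9) :
    {S ∈ BRTriangles sigma1 | S ⊆ W}.ncard ≤ 4 := by
  obtain ⟨W, rfl⟩ := W.toFinite.exists_finset_coe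
  rw [Set.ncard_coe_finset] at hW
  rw [ncard_brTriangles_subset]
  refine (card_filter_brTriangleFinset_subset_le sigma1 W).trans
    (card_add_card_le_four_sigma1 _ _ ((card_le_card ?_).trans hW))
  exact union_subset (biUnion_subset.2 fun i hi => (mem_filter.1 hi).2)
    (biUnion_subset.2 fun i hi => (mem_filter.1 hi).2)

def firstThreeRows : Finset (Fin 5 × ZMod 3) :=
  ({0, 1, 2} : Finset (Fin 5)).biUnion blackTriangle

lemma ncard_firstThreeRows : (firstThreeRows : Set (Fin 5 × ZMod 3)).ncard = 9 := by
  rw [Set.ncard_coe_finset]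
  decide

lemma five_le_ncard_brTriangles_subset_sigma2 :
    5 ≤ {S ∈ BRTriangles sigma2 | S ⊆ firstThreeRows}.ncard := by
  rw [ncard_brTriangles_subset]
  decide

end FiveTriangles

open FiveTriangles

/-- `5C₃` is not uniquely embeddable: there is an embedding `σ₁` for which every `9`-vertex
set contains at most `4` of the black/red triangles, and an embedding `σ₂` with a `9`-vertex
set containing `5` of them; hence the two edge-sums are not isomorphic. -/
theorem five_c3_not_uniquely_embeddable :
    ∃ σ₁ σ₂ : Equiv.Perm (Fin 5 × ZMod 3),
      IsGraphEmbedding (Triangles 5) σ₁ ∧ IsGraphEmbedding (Triangles 5) σ₂ ∧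
      (∀ W : Set (Fin 5 × ZMod 3), W.ncard = 9 →
        {S ∈ BRTriangles σ₁ | S ⊆ W}.ncard ≤ 4) ∧
      (∃ W : Set (Fin 5 × ZMod 3), W.ncard = 9 ∧
        5 ≤ {S ∈ BRTriangles σ₂ | S ⊆ W}.ncard) ∧
      ¬ Nonempty (EdgeSum (Triangles 5) σ₁ ≃g EdgeSum (Triangles 5) σ₂) := by
  refine ⟨sigma1, sigma2, isGraphEmbedding_sigma1, isGraphEmbedding_sigma2,
    fun W hW => ncard_brTriangles_subset_le_four_sigma1 hW.le,
    ⟨_, ncard_firstThreeRows, five_le_ncard_brTriangles_subset_sigma2⟩, ?_⟩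
  rintro ⟨e⟩
  have h5 := five_le_ncard_brTriangles_subset_sigma2.trans
    (ncard_brTriangles_subset_le_of_iso mem_brTriangles_of_isClique_sigma1 e.symm firstThreeRows)
  have h4 := ncard_brTriangles_subset_le_four_sigma1 (W := e.symm '' firstThreeRows)
    (by rw [Set.ncard_image_of_injective _ e.symm.injective, ncard_firstThreeRows])
  omega
end
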